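/- arXiv:1203.2351 — 4 statements merged into one kernel-verified Lean document; each statement's English description precedes it below -/
import Mathlib

section
/- Let V be convex, let (u,v) ∈ K, and let v*(y) = sup{s : u(x) + ϕ(x,y,s) ≤ 0 for all x ∈ U}, assumed finite and attained for each y ∈ V. If sup|ϕ_y| < ∞, then v* is Lipschitz continuous on V with |v*(y₂) − v*(y₁)| ≤ (sup|ϕ_y| / θ₀)|y₂ − y₁| for all y₁, y₂ ∈ V, where θ₀ > 0 is the lower bound ∂ₛϕ ≥ θ₀. -/
open MeasureTheory Set

/-- If V is convex, (u,v) ∈ K, the supremum defining v* is finite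
and attained, and sup|ϕ_y| < ∞, then v* is Lipschitz on V with constant sup|ϕ_y|/θ₀. -/
theorem vstar_lipschitz
    {n : ℕ} (U V : Set (EuclideanSpace ℝ (Fin n)))
    (hUo : IsOpen U) (hUb : Bornology.IsBounded U)
    (hVo : IsOpen V) (hVb : Bornology.IsBounded V) (hVconv : Convex ℝ V)
    (ϕ : EuclideanSpace ℝ (Fin n) → EuclideanSpace ℝ (Fin n) → ℝ → ℝ)
    (hϕ : ContDiff ℝ 1 (fun p : EuclideanSpace ℝ (Fin n) × EuclideanSpace ℝ (Fin n) × ℝ =>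
      ϕ p.1 p.2.1 p.2.2))
    (θ₀ : ℝ) (hθ₀ : 0 < θ₀)
    (hϕs : ∀ x ∈ U, ∀ y ∈ V, ∀ s : ℝ, θ₀ ≤ deriv (fun s' => ϕ x y s') s)
    (u v : EuclideanSpace ℝ (Fin n) → ℝ)
    (huv : ContinuousOn u U ∧ ContinuousOn v V ∧
      ∀ x ∈ U, ∀ y ∈ V, u x + ϕ x y (v y) ≤ 0)
    (vstar : EuclideanSpace ℝ (Fin n) → ℝ)
    (hvstar : ∀ y, vstar y = sSup {s : ℝ | ∀ x ∈ U, u x + ϕ x y s ≤ 0})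
    -- the supremum defining v* is finite and attained
    (hvmem : ∀ y ∈ V, ∀ x ∈ U, u x + ϕ x y (vstar y) ≤ 0)
    (hvatt : ∀ y ∈ V, ∃ x ∈ U, u x + ϕ x y (vstar y) = 0)
    (Cy : ℝ)
    (hCy : ∀ x ∈ U, ∀ y ∈ V, ∀ s : ℝ, ‖gradient (fun y' => ϕ x y' s) y‖ ≤ Cy) :
    ∀ y₁ ∈ V, ∀ y₂ ∈ V, |vstar y₂ - vstar y₁| ≤ (Cy / θ₀) * ‖y₂ - y₁‖ := by

  intro y₁ hy₁ y₂ hy₂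
  obtain ⟨hu, hv, hK⟩ := huv
  have hϕd : Differentiable ℝ (fun p : EuclideanSpace ℝ (Fin n) × EuclideanSpace ℝ (Fin n) × ℝ =>
      ϕ p.1 p.2.1 p.2.2) := hϕ.differentiable one_ne_zero
  have hdiffs : ∀ x y s, DifferentiableAt ℝ (fun s' => ϕ x y s') s := by
    intro x y s
    exact (hϕd (x, y, s)).comp (f := fun s' : ℝ => (x, y, s')) s
      ((differentiableAt_const x).prodMk ((differentiableAt_const y).prodMk differentiableAt_fun_id))
  have hdiffy : ∀ x s y, DifferentiableAt ℝ (fun y' => ϕ x y' s) y := by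
    intro x s y
    exact (hϕd (x, y, s)).comp (f := fun y' : EuclideanSpace ℝ (Fin n) => (x, y', s)) y
      ((differentiableAt_const x).prodMk (differentiableAt_fun_id.prodMk (differentiableAt_const s)))
  -- Cy ≥ 0
  obtain ⟨x₀, hx₀, -⟩ := hvatt y₁ hy₁
  have hCy0 : 0 ≤ Cy := le_trans (norm_nonneg _) (hCy x₀ hx₀ y₁ hy₁ 0)
  -- Lemma 1 : monotonicity in s with rate θ₀
  have mono : ∀ x ∈ U, ∀ y ∈ V, ∀ a b : ℝ, a ≤ b →
      θ₀ * (b - a) ≤ ϕ x y b - ϕ x y a := by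
    intro x hx y hy a b hab
    set g : ℝ → ℝ := fun s' => ϕ x y s' - θ₀ * s' with hg
    have hgd : ∀ s, HasDerivAt g (deriv (fun s' => ϕ x y s') s - θ₀) s := by
      intro s
      have h1 := (hdiffs x y s).hasDerivAt
      have h2 : HasDerivAt (fun s' : ℝ => θ₀ * s') θ₀ s := by
        simpa using (hasDerivAt_id s).const_mul θ₀
      exact h1.sub h2
    have hmono : Monotone g := by
      apply monotone_of_deriv_nonneg
      · exact fun s => ((hgd s).differentiableAt)
      · intro s
        rw [(hgd s).deriv]
        have := hϕs x hx y hy s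
        linarith
    have := hmono hab
    simp only [hg] at this
    linarith
  -- Lemma 2 : Lipschitz in y with constant Cy
  have lipy : ∀ x ∈ U, ∀ s : ℝ, ∀ z₁ ∈ V, ∀ z₂ ∈ V,
      ‖ϕ x z₂ s - ϕ x z₁ s‖ ≤ Cy * ‖z₂ - z₁‖ := by
    intro x hx s z₁ h₁ z₂ h₂
    apply hVconv.norm_image_sub_le_of_norm_fderiv_le
      (fun y _ => hdiffy x s y) _ h₁ h₂
    intro y hy
    have hgrad := hCy x hx y hy s
    have : ‖gradient (fun y' => ϕ x y' s) y‖ = ‖fderiv ℝ (fun y' => ϕ x y' s) y‖ := by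
      simp [gradient, LinearIsometryEquiv.norm_map]
    rw [this] at hgrad
    exact hgrad
  -- Key one-sided estimate
  have key : ∀ z₁ ∈ V, ∀ z₂ ∈ V, vstar z₂ - vstar z₁ ≤ (Cy / θ₀) * ‖z₂ - z₁‖ := by
    intro z₁ h₁ z₂ h₂
    rcases le_or_gt (vstar z₂) (vstar z₁) with h | h
    · have : (0:ℝ) ≤ (Cy / θ₀) * ‖z₂ - z₁‖ :=
        mul_nonneg (div_nonneg hCy0 hθ₀.le) (norm_nonneg _)
      linarith
    · obtain ⟨x₁, hx₁, hatt⟩ := hvatt z₁ h₁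
      have hle : u x₁ + ϕ x₁ z₂ (vstar z₂) ≤ 0 := hvmem z₂ h₂ x₁ hx₁
      have h1 : θ₀ * (vstar z₂ - vstar z₁) ≤ ϕ x₁ z₂ (vstar z₂) - ϕ x₁ z₂ (vstar z₁) :=
        mono x₁ hx₁ z₂ h₂ _ _ h.le
      have h2 : ϕ x₁ z₂ (vstar z₂) ≤ ϕ x₁ z₁ (vstar z₁) := by linarith
      have h3 : ϕ x₁ z₁ (vstar z₁) - ϕ x₁ z₂ (vstar z₁) ≤ Cy * ‖z₁ - z₂‖ :=
        le_trans (le_abs_self _) (lipy x₁ hx₁ (vstar z₁) z₂ h₂ z₁ h₁)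
      rw [norm_sub_rev] at h3
      have h4 : θ₀ * (vstar z₂ - vstar z₁) ≤ Cy * ‖z₂ - z₁‖ := by linarith
      rw [div_mul_eq_mul_div, le_div_iff₀ hθ₀, mul_comm]
      linarith
  have h12 := key y₁ hy₁ y₂ hy₂
  have h21 := key y₂ hy₂ y₁ hy₁
  rw [norm_sub_rev] at h21
  rw [abs_sub_le_iff]
  exact ⟨h12, h21⟩
end

section
/- Let (u,v) ∈ K and suppose that at points x₀ ∈ U, y₀ ∈ V one has equality u(x₀) + ϕ(x₀,y₀,v(y₀)) = 0, and that v is differentiable at y₀. Then Dv(y₀) = −ϕ_y(x₀,y₀,v(y₀)) / ∂ₛϕ(x₀,y₀,v(y₀)). -/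
open MeasureTheory Set

/-- If (u,v) ∈ K, equality u(x₀) + ϕ(x₀,y₀,v(y₀)) = 0 holds at
x₀ ∈ U, y₀ ∈ V, and v is differentiable at y₀, then
Dv(y₀) = −ϕ_y(x₀,y₀,v(y₀)) / ∂ₛϕ(x₀,y₀,v(y₀)). -/
theorem gradient_dual_potential
    {n : ℕ} (U V : Set (EuclideanSpace ℝ (Fin n)))
    (hUo : IsOpen U) (hUb : Bornology.IsBounded U)
    (hVo : IsOpen V) (hVb : Bornology.IsBounded V)
    (ϕ : EuclideanSpace ℝ (Fin n) → EuclideanSpace ℝ (Fin n) → ℝ → ℝ)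
    (hϕ : ContDiff ℝ 1 (fun p : EuclideanSpace ℝ (Fin n) × EuclideanSpace ℝ (Fin n) × ℝ =>
      ϕ p.1 p.2.1 p.2.2))
    (θ₀ : ℝ) (hθ₀ : 0 < θ₀)
    (hϕs : ∀ x ∈ U, ∀ y ∈ V, ∀ s : ℝ, θ₀ ≤ deriv (fun s' => ϕ x y s') s)
    (u v : EuclideanSpace ℝ (Fin n) → ℝ)
    (huv : ContinuousOn u U ∧ ContinuousOn v V ∧
      ∀ x ∈ U, ∀ y ∈ V, u x + ϕ x y (v y) ≤ 0)
    (x₀ : EuclideanSpace ℝ (Fin n)) (hx₀ : x₀ ∈ U)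
    (y₀ : EuclideanSpace ℝ (Fin n)) (hy₀ : y₀ ∈ V)
    (heq : u x₀ + ϕ x₀ y₀ (v y₀) = 0)
    (hv : DifferentiableAt ℝ v y₀) :
    gradient v y₀ =
      -(deriv (fun s' => ϕ x₀ y₀ s') (v y₀))⁻¹ •
        gradient (fun y' => ϕ x₀ y' (v y₀)) y₀ := by
  have hFd : DifferentiableAt ℝ
      (fun p : EuclideanSpace ℝ (Fin n) × ℝ => ϕ x₀ p.1 p.2) (y₀, v y₀) := by
    have h1 : Differentiable ℝ
        (fun p : EuclideanSpace ℝ (Fin n) × EuclideanSpace ℝ (Fin n) × ℝ =>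
          ϕ p.1 p.2.1 p.2.2) := hϕ.differentiable one_ne_zero
    exact (h1 (x₀, y₀, v y₀)).comp (y₀, v y₀)
      (DifferentiableAt.prodMk (differentiableAt_const x₀) differentiableAt_id)
  set D := fderiv ℝ (fun p : EuclideanSpace ℝ (Fin n) × ℝ => ϕ x₀ p.1 p.2) (y₀, v y₀) with hD
  have h1 : HasFDerivAt (fun p : EuclideanSpace ℝ (Fin n) × ℝ => ϕ x₀ p.1 p.2) D (y₀, v y₀) :=
    hFd.hasFDerivAt
  have h2 : HasFDerivAt (fun y : EuclideanSpace ℝ (Fin n) => (y, v y))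
      ((ContinuousLinearMap.id ℝ (EuclideanSpace ℝ (Fin n))).prod (fderiv ℝ v y₀)) y₀ :=
    HasFDerivAt.prodMk (hasFDerivAt_id y₀) hv.hasFDerivAt
  have hg : HasFDerivAt (fun y : EuclideanSpace ℝ (Fin n) => ϕ x₀ y (v y))
      (D.comp ((ContinuousLinearMap.id ℝ (EuclideanSpace ℝ (Fin n))).prod (fderiv ℝ v y₀)))
      y₀ := by have := h1.comp y₀ h2; exact this
  have hA : HasFDerivAt (fun y : EuclideanSpace ℝ (Fin n) => ϕ x₀ y (v y₀))
      (D.comp ((ContinuousLinearMap.id ℝ (EuclideanSpace ℝ (Fin n))).prod 0)) y₀ :=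
    by have := h1.comp y₀ (f := fun y => (y, v y₀)) (HasFDerivAt.prodMk (hasFDerivAt_id (𝕜 := ℝ) y₀) (hasFDerivAt_const (v y₀) y₀)); exact this
  have hc : HasDerivAt (fun s : ℝ => ϕ x₀ y₀ s) (D (0, 1)) (v y₀) := by
    have := (h1.comp (v y₀)
      (HasFDerivAt.prodMk (hasFDerivAt_const y₀ (v y₀)) (hasFDerivAt_id (v y₀)))).hasDerivAt
    exact this
  set c : ℝ := D (0, 1) with hcdef
  have hcd : deriv (fun s' => ϕ x₀ y₀ s') (v y₀) = c := hc.deriv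
  have hcpos : 0 < c := lt_of_lt_of_le hθ₀ (hcd ▸ hϕs x₀ hx₀ y₀ hy₀ (v y₀))
  have hcne : c ≠ 0 := ne_of_gt hcpos
  have hmax : IsLocalMax (fun y : EuclideanSpace ℝ (Fin n) => ϕ x₀ y (v y)) y₀ := by
    filter_upwards [hVo.mem_nhds hy₀] with y hy
    have h1 := huv.2.2 x₀ hx₀ y hy
    simp only [ge_iff_le]
    linarith [heq, h1]
  have hD0 : D.comp ((ContinuousLinearMap.id ℝ (EuclideanSpace ℝ (Fin n))).prod
      (fderiv ℝ v y₀)) = 0 := hmax.hasFDerivAt_eq_zero hg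
  have hkey : fderiv ℝ v y₀ = (-c⁻¹) •
      (D.comp ((ContinuousLinearMap.id ℝ (EuclideanSpace ℝ (Fin n))).prod 0)) := by
    ext h
    have hz : D (h, fderiv ℝ v y₀ h) = 0 := by
      have := congrFun (congrArg DFunLike.coe hD0) h
      simpa using this
    have hsplit : D (h, fderiv ℝ v y₀ h) = D (h, 0) + (fderiv ℝ v y₀ h) * c := by
      have he : (h, fderiv ℝ v y₀ h) =
          (h, (0:ℝ)) + (fderiv ℝ v y₀ h) • ((0 : EuclideanSpace ℝ (Fin n)), (1:ℝ)) := by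
        simp [Prod.ext_iff]
      rw [he, D.map_add, D.map_smul, smul_eq_mul]
    have hfin : fderiv ℝ v y₀ h = -c⁻¹ * D (h, 0) := by
      field_simp
      linarith [hz, hsplit]
    simpa using hfin
  have hgv : gradient v y₀ =
      (InnerProductSpace.toDual ℝ (EuclideanSpace ℝ (Fin n))).symm (fderiv ℝ v y₀) :=
    (hv.hasFDerivAt.hasGradientAt).gradient
  have hgA : gradient (fun y' : EuclideanSpace ℝ (Fin n) => ϕ x₀ y' (v y₀)) y₀ =
      (InnerProductSpace.toDual ℝ (EuclideanSpace ℝ (Fin n))).symm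
        (D.comp ((ContinuousLinearMap.id ℝ (EuclideanSpace ℝ (Fin n))).prod 0)) :=
    (hA.hasGradientAt).gradient
  rw [hgv, hgA, hkey, hcd, LinearIsometryEquiv.map_smul]
end

section
/- Let (u,v) ∈ K be a dual maximizing pair of I, with v Lipschitz continuous, and let the dual constraint ϕ* (defined by the identity −ϕ(x,y,−ϕ*(x,y,t)) = t for (x,y) ∈ U×V, t ∈ ℝ) satisfy condition (H1*): for each y₀ ∈ V and each (q,s) ∈ ℝⁿ×ℝ there is at most one pair (x,t) ∈ ℝⁿ×ℝ with ϕ*_y(x,y₀,t) = −q and ϕ*(x,y₀,t) = −s. Define Y = {y ∈ V : there exist x₁ ≠ x₂ ∈ U with y ∈ T_u(x₁) ∩ T_u(x₂)}, where T_u(x₀) is the set of y₀ for which there exists s₀ ∈ ℝ with u(x₀) + ϕ(x₀,y₀,s₀) = 0 and u(x) + ϕ(x,y₀,s₀) ≤ 0 for all x ∈ U. Then Y has Lebesgue measure zero. -/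
open MeasureTheory Set

lemma phi_mono_aux (ϕ1 : ℝ → ℝ) (hdiff : Differentiable ℝ ϕ1) (θ₀ : ℝ)
    (hd : ∀ s, θ₀ ≤ deriv ϕ1 s) : ∀ a b, a ≤ b → θ₀ * (b - a) ≤ ϕ1 b - ϕ1 a := by
  intro a b hab
  have hmono : Monotone (fun s => ϕ1 s - θ₀ * s) := by
    apply monotone_of_deriv_nonneg
    · exact hdiff.sub ((differentiable_id.const_mul θ₀))
    · intro s
      have h1 : HasDerivAt (fun s => θ₀ * s) θ₀ s := by
        simpa using (hasDerivAt_id s).const_mul θ₀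
      rw [deriv_fun_sub (hdiff s) h1.differentiableAt, h1.deriv]
      linarith [hd s]
  have := hmono hab
  simp only at this
  linarith

lemma phi_mono_abs (ϕ1 : ℝ → ℝ) (hdiff : Differentiable ℝ ϕ1) (θ₀ : ℝ) (hθ₀ : 0 < θ₀)
    (hd : ∀ s, θ₀ ≤ deriv ϕ1 s) : ∀ a b, θ₀ * |b - a| ≤ |ϕ1 b - ϕ1 a| := by
  intro a b
  rcases le_total a b with h | h
  · have := phi_mono_aux ϕ1 hdiff θ₀ hd a b h
    rw [abs_of_nonneg (by linarith), abs_of_nonneg (by nlinarith)]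
    exact this
  · have := phi_mono_aux ϕ1 hdiff θ₀ hd b a h
    rw [abs_of_nonpos (by linarith), abs_of_nonpos (by nlinarith)]
    linarith

lemma phi_le_of_le (ϕ1 : ℝ → ℝ) (hdiff : Differentiable ℝ ϕ1) (θ₀ : ℝ) (hθ₀ : 0 < θ₀)
    (hd : ∀ s, θ₀ ≤ deriv ϕ1 s) : ∀ a b, ϕ1 a ≤ ϕ1 b → a ≤ b := by
  intro a b hab
  by_contra hba
  push_neg at hba
  have := phi_mono_aux ϕ1 hdiff θ₀ hd b a hba.le
  nlinarith

lemma phi_inj (ϕ1 : ℝ → ℝ) (hdiff : Differentiable ℝ ϕ1) (θ₀ : ℝ) (hθ₀ : 0 < θ₀)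
    (hd : ∀ s, θ₀ ≤ deriv ϕ1 s) : ∀ a b, ϕ1 a = ϕ1 b → a = b := by
  intro a b hab
  exact le_antisymm (phi_le_of_le ϕ1 hdiff θ₀ hθ₀ hd a b hab.le)
    (phi_le_of_le ϕ1 hdiff θ₀ hθ₀ hd b a hab.ge)

-- implicit function differentiability
open Filter Topology in
lemma implicit_diffAt {E : Type*} [NormedAddCommGroup E] [NormedSpace ℝ E]
    [FiniteDimensional ℝ E]
    (ϕf : E × (E × ℝ) → ℝ) (hϕ : ContDiff ℝ 1 ϕf) (θ₀ : ℝ) (hθ₀ : 0 < θ₀)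
    (x₀ : E) (V : Set E) (hVo : IsOpen V) (y₀ : E) (hy₀ : y₀ ∈ V)
    (hd : ∀ y ∈ V, ∀ s : ℝ, θ₀ ≤ deriv (fun s' => ϕf (x₀, (y, s'))) s)
    (w : E → ℝ) (t₀ : ℝ) (hw : ∀ y ∈ V, ϕf (x₀, (y, w y)) = -t₀) :
    DifferentiableAt ℝ w y₀ := by
  have hdiffs : ∀ y : E, Differentiable ℝ (fun s' => ϕf (x₀, (y, s'))) := by
    intro y
    exact (hϕ.differentiable one_ne_zero).comp
      ((differentiable_const x₀).prodMk ((differentiable_const y).prodMk differentiable_id))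
  -- continuity of w on V
  have hwc : ∀ y₁ ∈ V, ContinuousAt w y₁ := by
    intro y₁ hy₁
    have key : ∀ y ∈ V, |w y - w y₁| ≤ θ₀⁻¹ * |ϕf (x₀, (y₁, w y₁)) - ϕf (x₀, (y, w y₁))| := by
      intro y hy
      have h1 := phi_mono_abs _ (hdiffs y) θ₀ hθ₀ (hd y hy) (w y₁) (w y)
      rw [hw y hy, ← hw y₁ hy₁] at h1
      rw [inv_mul_eq_div, le_div_iff₀ hθ₀]
      linarith [h1, mul_comm θ₀ |w y - w y₁|]
    have hcontphi : ContinuousAt (fun y => θ₀⁻¹ * |ϕf (x₀, (y₁, w y₁)) - ϕf (x₀, (y, w y₁))|) y₁ := by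
      have : Continuous (fun y : E => ϕf (x₀, (y, w y₁))) :=
        (hϕ.continuous).comp (continuous_const.prodMk (continuous_id.prodMk continuous_const))
      exact (continuous_const.mul ((continuous_const.sub this).abs)).continuousAt
    have h0 : Tendsto (fun y => |w y - w y₁|) (𝓝 y₁) (𝓝 0) := by
      apply squeeze_zero' (Filter.Eventually.mono (hVo.mem_nhds hy₁) (fun y _ => abs_nonneg _))
        (Filter.Eventually.mono (hVo.mem_nhds hy₁) key)
      have := hcontphi.tendsto
      simpa using this
    rw [Metric.continuousAt_iff']
    intro ε hε
    filter_upwards [h0.eventually (eventually_lt_nhds hε)] with y hy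
    rwa [Real.dist_eq]
  -- set up the inverse function theorem
  set s₀ : ℝ := w y₀ with hs₀
  set p₀ : E × (E × ℝ) := (x₀, (y₀, s₀)) with hp₀
  set Lϕ : (E × (E × ℝ)) →L[ℝ] ℝ := fderiv ℝ ϕf p₀ with hLϕ
  have hLs : HasStrictFDerivAt ϕf Lϕ p₀ := (hϕ.contDiffAt).hasStrictFDerivAt one_ne_zero
  set q₀ : E × ℝ := (y₀, s₀) with hq₀
  set ι : (E × ℝ) →L[ℝ] (E × (E × ℝ)) :=
    ((0 : (E × ℝ) →L[ℝ] E).prod (ContinuousLinearMap.id ℝ (E × ℝ))) with hι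
  have hιd : HasStrictFDerivAt (fun q : E × ℝ => (x₀, q)) ι q₀ :=
    (hasStrictFDerivAt_const x₀ q₀).prodMk (hasStrictFDerivAt_id q₀)
  set Φ : E × ℝ → E × ℝ := fun q => (q.1, ϕf (x₀, q)) with hΦdef
  set D : (E × ℝ) →L[ℝ] (E × ℝ) :=
    (ContinuousLinearMap.fst ℝ E ℝ).prod (Lϕ.comp ι) with hD
  have hΦ : HasStrictFDerivAt Φ D q₀ :=
    ((ContinuousLinearMap.fst ℝ E ℝ).hasStrictFDerivAt).prodMk ((hLs.comp q₀ hιd))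
  -- the partial derivative in s
  have hb : HasDerivAt (fun s : ℝ => ϕf (x₀, (y₀, s))) (Lϕ ((0 : E), ((0 : E), (1 : ℝ)))) s₀ := by
    have h2 : HasDerivAt (fun s : ℝ => ((x₀, (y₀, s)) : E × (E × ℝ)))
        ((0 : E), ((0 : E), (1 : ℝ))) s₀ :=
      (hasDerivAt_const s₀ x₀).prodMk ((hasDerivAt_const s₀ y₀).prodMk (hasDerivAt_id s₀))
    exact hLs.hasFDerivAt.comp_hasDerivAt s₀ h2
  have hbpos : 0 < Lϕ ((0 : E), ((0 : E), (1 : ℝ))) := by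
    have := hd y₀ hy₀ s₀
    rw [hb.deriv] at this
    linarith
  -- D is bijective
  have hinj : Function.Injective (D : (E × ℝ) →ₗ[ℝ] (E × ℝ)) := by
    intro q q' hqq
    have h1 : (q.1, Lϕ (ι q)) = (q'.1, Lϕ (ι q')) := hqq
    have hfst : q.1 = q'.1 := (Prod.ext_iff.mp h1).1
    have hsnd : Lϕ (ι q) = Lϕ (ι q') := (Prod.ext_iff.mp h1).2
    have hexp : ∀ r : E × ℝ, Lϕ (ι r) = Lϕ ((0 : E), (r.1, (0:ℝ)))
        + r.2 * Lϕ ((0 : E), ((0 : E), (1 : ℝ))) := by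
      intro r
      have : (ι r : E × (E × ℝ)) = ((0 : E), (r.1, (0:ℝ))) + r.2 • ((0 : E), ((0 : E), (1 : ℝ))) := by
        simp [hι, Prod.ext_iff]
      rw [this, map_add, _root_.map_smul]
      simp [smul_eq_mul]
    have e1 := hexp q
    have e2 := hexp q'
    rw [hfst] at e1
    have : q.2 * Lϕ ((0 : E), ((0 : E), (1 : ℝ))) = q'.2 * Lϕ ((0 : E), ((0 : E), (1 : ℝ))) := by
      rw [e1, e2] at hsnd; linarith
    have hq2 : q.2 = q'.2 := by
      exact mul_right_cancel₀ (ne_of_gt hbpos) this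
    exact Prod.ext hfst hq2
  have hsurj : Function.Surjective (D : (E × ℝ) →ₗ[ℝ] (E × ℝ)) :=
    (LinearMap.injective_iff_surjective).mp hinj
  set eD : (E × ℝ) ≃ₗ[ℝ] (E × ℝ) := LinearEquiv.ofBijective _ ⟨hinj, hsurj⟩ with heD
  set CLE : (E × ℝ) ≃L[ℝ] (E × ℝ) := eD.toContinuousLinearEquiv with hCLE
  have hcoe : (CLE : (E × ℝ) →L[ℝ] (E × ℝ)) = D :=
    ContinuousLinearMap.ext fun q => rfl
  have hΦ' : HasStrictFDerivAt Φ (CLE : (E × ℝ) →L[ℝ] (E × ℝ)) q₀ := by rwa [hcoe]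
  -- local inverse
  have hleft := hΦ'.eventually_left_inverse
  have hcw : ContinuousAt (fun y : E => ((y, w y) : E × ℝ)) y₀ :=
    (continuousAt_id).prodMk (hwc y₀ hy₀)
  have hΦq₀ : Φ q₀ = (y₀, -t₀) := by
    show ((y₀ : E), ϕf (x₀, (y₀, s₀))) = (y₀, -t₀)
    rw [hs₀, hw y₀ hy₀]
  have hev : ∀ᶠ y in 𝓝 y₀, w y = (hΦ'.localInverse Φ CLE q₀ (y, -t₀)).2 := by
    have h1 : ∀ᶠ y in 𝓝 y₀, hΦ'.localInverse Φ CLE q₀ (Φ (y, w y)) = (y, w y) := by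
      have ht : Tendsto (fun y : E => ((y, w y) : E × ℝ)) (𝓝 y₀) (𝓝 q₀) := hcw.tendsto
      exact ht.eventually hleft
    filter_upwards [h1, hVo.mem_nhds hy₀] with y h1y hyV
    have : Φ (y, w y) = (y, -t₀) := by
      simp only [hΦdef]
      rw [hw y hyV]
    rw [this] at h1y
    exact congrArg Prod.snd h1y.symm
  have hlv : DifferentiableAt ℝ (fun y : E => (hΦ'.localInverse Φ CLE q₀ (y, -t₀)).2) y₀ := by
    have h1 : HasStrictFDerivAt (hΦ'.localInverse Φ CLE q₀)
        (CLE.symm : (E × ℝ) →L[ℝ] (E × ℝ)) (Φ q₀) := hΦ'.to_localInverse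
    rw [hΦq₀] at h1
    have h2 : DifferentiableAt ℝ (fun y : E => ((y, -t₀) : E × ℝ)) y₀ :=
      (differentiableAt_id).prodMk (differentiableAt_const _)
    exact (h1.differentiableAt.comp y₀ h2).snd
  exact (Filter.EventuallyEq.differentiableAt_iff hev).mpr hlv

/-- **Lemma 3.4.** Let (u,v) ∈ K be a dual maximizing pair of I with v
Lipschitz, and assume the dual constraint ϕ* satisfies (H1*). Then the set Y of points
of V lying in the ϕ-normal image of two distinct points of U has Lebesgue measure zero. -/
theorem multi_valued_set_measure_zero
    {n : ℕ} (U V : Set (EuclideanSpace ℝ (Fin n)))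
    (hUo : IsOpen U) (hUb : Bornology.IsBounded U) (hUc : IsConnected U)
    (hVo : IsOpen V) (hVb : Bornology.IsBounded V) (hVc : IsConnected V)
    (γ : Measure (EuclideanSpace ℝ (Fin n) × EuclideanSpace ℝ (Fin n)))
    (hγ1 : ∀ A : Set (EuclideanSpace ℝ (Fin n)),
      MeasurableSet A → A ⊆ U → γ (A ×ˢ V) = volume A)
    (hγ2 : ∀ B : Set (EuclideanSpace ℝ (Fin n)),
      MeasurableSet B → B ⊆ V → γ (U ×ˢ B) = volume B)
    (F : EuclideanSpace ℝ (Fin n) → EuclideanSpace ℝ (Fin n) → ℝ → ℝ → ℝ)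
    (ϕ : EuclideanSpace ℝ (Fin n) → EuclideanSpace ℝ (Fin n) → ℝ → ℝ)
    (hϕ : ContDiff ℝ 1 (fun p : EuclideanSpace ℝ (Fin n) × EuclideanSpace ℝ (Fin n) × ℝ =>
      ϕ p.1 p.2.1 p.2.2))
    (θ₀ : ℝ) (hθ₀ : 0 < θ₀)
    (hϕs : ∀ x ∈ U, ∀ y ∈ V, ∀ s : ℝ, θ₀ ≤ deriv (fun s' => ϕ x y s') s)
    -- the dual constraint ϕ*
    (ϕstar : EuclideanSpace ℝ (Fin n) → EuclideanSpace ℝ (Fin n) → ℝ → ℝ)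
    (hϕstar : ∀ x ∈ U, ∀ y ∈ V, ∀ t : ℝ, -ϕ x y (-ϕstar x y t) = t)
    -- condition (H1*)
    (hH1star : ∀ y₀ ∈ V, ∀ (q : EuclideanSpace ℝ (Fin n)) (s : ℝ),
      ∀ (x t x' t'),
        gradient (fun y => ϕstar x y t) y₀ = -q → ϕstar x y₀ t = -s →
        gradient (fun y => ϕstar x' y t') y₀ = -q → ϕstar x' y₀ t' = -s →
        x = x' ∧ t = t')
    (K : (EuclideanSpace ℝ (Fin n) → ℝ) → (EuclideanSpace ℝ (Fin n) → ℝ) → Prop)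
    (hK : ∀ u v, K u v ↔ (ContinuousOn u U ∧ ContinuousOn v V ∧
      ∀ x ∈ U, ∀ y ∈ V, u x + ϕ x y (v y) ≤ 0))
    (I : (EuclideanSpace ℝ (Fin n) → ℝ) → (EuclideanSpace ℝ (Fin n) → ℝ) → ℝ)
    (hI : ∀ u v, I u v = ∫ z in U ×ˢ V, F z.1 z.2 (u z.1) (v z.2) ∂γ)
    -- (u,v) ∈ K is a dual maximizing pair of I, with v Lipschitz
    (u v : EuclideanSpace ℝ (Fin n) → ℝ) (huv : K u v)
    (hdual1 : ∀ x ∈ U, u x = sSup {t : ℝ | ∀ y ∈ V, t + ϕ x y (v y) ≤ 0})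
    (hdual2 : ∀ y ∈ V, v y = sSup {s : ℝ | ∀ x ∈ U, u x + ϕ x y s ≤ 0})
    (hmax : ∀ u' v', K u' v' → I u' v' ≤ I u v)
    (hvlip : ∃ L : NNReal, LipschitzOnWith L v V)
    -- the ϕ-normal mapping of u
    (Tu : EuclideanSpace ℝ (Fin n) → Set (EuclideanSpace ℝ (Fin n)))
    (hTu : ∀ x₀, Tu x₀ = {y₀ | ∃ s₀ : ℝ, u x₀ + ϕ x₀ y₀ s₀ = 0 ∧
      ∀ x ∈ U, u x + ϕ x y₀ s₀ ≤ 0}) :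
    volume {y ∈ V | ∃ x₁ ∈ U, ∃ x₂ ∈ U, x₁ ≠ x₂ ∧ y ∈ Tu x₁ ∧ y ∈ Tu x₂} = 0 := by
  classical
  obtain ⟨hucont, hvcont, hKineq⟩ := (hK u v).mp huv
  obtain ⟨L, hLip⟩ := hvlip
  obtain ⟨vex, hvexlip, hEq⟩ := hLip.extend_real
  -- differentiability of ϕ in s
  have hdiffs : ∀ (x y : (EuclideanSpace ℝ (Fin n))), Differentiable ℝ (fun s' : ℝ => ϕ x y s') := by
    intro x y
    exact (hϕ.differentiable one_ne_zero).comp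
      ((differentiable_const x).prodMk ((differentiable_const y).prodMk differentiable_id))
  -- key pointwise claim
  have main : ∀ y₀ ∈ V, DifferentiableAt ℝ v y₀ →
      ∀ x ∈ U, y₀ ∈ Tu x →
        ϕstar x y₀ (u x) = -(v y₀) ∧
        gradient (fun y => ϕstar x y (u x)) y₀ = -(gradient v y₀) := by
    intro y₀ hy₀ hdv x hx hyT
    rw [hTu x] at hyT
    obtain ⟨s₀, hs0eq, hs0le⟩ := hyT
    set w : (EuclideanSpace ℝ (Fin n)) → ℝ := fun y => -ϕstar x y (u x) with hwdef
    have hw : ∀ y ∈ V, ϕ x y (w y) = -(u x) := by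
      intro y hy
      have := hϕstar x hx y hy (u x)
      simp only [hwdef]
      linarith
    -- w y₀ = s₀
    have hinjy₀ := phi_inj (fun s => ϕ x y₀ s) (hdiffs x y₀) θ₀ hθ₀ (hϕs x hx y₀ hy₀)
    have hws₀ : w y₀ = s₀ := by
      apply hinjy₀
      show ϕ x y₀ (w y₀) = ϕ x y₀ s₀
      rw [hw y₀ hy₀]
      linarith [hs0eq]
    -- v y₀ = s₀
    have hvs₀ : v y₀ = s₀ := by
      rw [hdual2 y₀ hy₀]
      have hmem : s₀ ∈ {s : ℝ | ∀ x' ∈ U, u x' + ϕ x' y₀ s ≤ 0} := hs0le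
      have hub : s₀ ∈ upperBounds {s : ℝ | ∀ x' ∈ U, u x' + ϕ x' y₀ s ≤ 0} := by
        intro s hs
        apply phi_le_of_le (fun s => ϕ x y₀ s) (hdiffs x y₀) θ₀ hθ₀ (hϕs x hx y₀ hy₀)
        show ϕ x y₀ s ≤ ϕ x y₀ s₀
        have h1 := hs x hx
        linarith [hs0eq]
      exact le_antisymm (csSup_le ⟨s₀, hmem⟩ (fun s hs => hub hs)) (le_csSup ⟨s₀, hub⟩ hmem)
    -- v ≤ w on V
    have hvw : ∀ y ∈ V, v y ≤ w y := by
      intro y hy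
      apply phi_le_of_le (fun s => ϕ x y s) (hdiffs x y) θ₀ hθ₀ (hϕs x hx y hy)
      show ϕ x y (v y) ≤ ϕ x y (w y)
      have h1 := hKineq x hx y hy
      rw [hw y hy]
      linarith
    -- w differentiable at y₀
    have hdw : DifferentiableAt ℝ w y₀ := by
      apply implicit_diffAt (fun p : (EuclideanSpace ℝ (Fin n)) × (EuclideanSpace ℝ (Fin n)) × ℝ => ϕ p.1 p.2.1 p.2.2) hϕ θ₀ hθ₀ x V hVo y₀ hy₀
        (fun y hy s => hϕs x hx y hy s) w (u x) hw
    -- local max argument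
    have hlm : IsLocalMax (fun y => v y - w y) y₀ := by
      filter_upwards [hVo.mem_nhds hy₀] with y hy
      have := hvw y hy
      have h2 : v y₀ - w y₀ = 0 := by rw [hvs₀, hws₀]; ring
      simp only [h2]
      linarith
    have hfd : HasFDerivAt (fun y => v y - w y) (fderiv ℝ v y₀ - fderiv ℝ w y₀) y₀ :=
      hdv.hasFDerivAt.sub hdw.hasFDerivAt
    have hzero : fderiv ℝ v y₀ - fderiv ℝ w y₀ = 0 := hlm.hasFDerivAt_eq_zero hfd
    have hfw : fderiv ℝ w y₀ = fderiv ℝ v y₀ := by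
      rw [sub_eq_zero] at hzero; exact hzero.symm
    constructor
    · have : ϕstar x y₀ (u x) = -(w y₀) := by simp [hwdef]
      rw [this, hws₀, hvs₀]
    · have hgw : (fun y => ϕstar x y (u x)) = (fun y => -(w y)) := by
        funext y; simp [hwdef]
      rw [hgw]
      unfold gradient
      rw [fderiv_fun_neg, hfw, map_neg]
  -- Rademacher
  have hae := hvexlip.ae_differentiableAt (μ := MeasureTheory.volume (α := (EuclideanSpace ℝ (Fin n))))
  rw [MeasureTheory.ae_iff] at hae
  apply MeasureTheory.measure_mono_null _ hae
  intro y₀ hy₀mem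
  simp only [Set.mem_setOf_eq] at hy₀mem ⊢
  obtain ⟨hy₀V, x₁, hx₁, x₂, hx₂, hne, hT1, hT2⟩ := hy₀mem
  intro hdvex
  have hvvex : vex =ᶠ[nhds y₀] v := by
    filter_upwards [hVo.mem_nhds hy₀V] with y hy
    exact (hEq hy).symm
  have hdv : DifferentiableAt ℝ v y₀ := (hvvex.differentiableAt_iff).mp hdvex
  obtain ⟨hval1, hgrad1⟩ := main y₀ hy₀V hdv x₁ hx₁ hT1
  obtain ⟨hval2, hgrad2⟩ := main y₀ hy₀V hdv x₂ hx₂ hT2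
  exact hne (hH1star y₀ hy₀V (gradient v y₀) (v y₀) x₁ (u x₁) x₂ (u x₂)
    hgrad1 hval1 hgrad2 hval2).1
end

section
/- Fix x ∈ ℝⁿ, a real number u₀ > 0, and p ∈ ℝⁿ with |p| < 1. Suppose v > 0 and y ∈ ℝⁿ satisfy the stationarity condition (x − y)v = −p and the contact condition u₀ − 1/(2v) + (v/2)|x − y|² = 0. Then v = (1 − |p|²)/(2u₀) and y = x + 2u₀ p/(1 − |p|²). Consequently, for the near field reflector problem with parallel source and constraint ϕ(x,y,s) = −1/(2s) + (s/2)|x − y|², the optimal mapping determined by ϕ_x(x,y,v) + Du(x) = 0 together with u(x) + ϕ(x,y,v) = 0 (with u > 0, |Du| < 1) coincides with the reflection mapping T(x) = x + 2u(x)Du(x)/(1 − |Du(x)|²). -/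
open MeasureTheory Set


lemma aux_gradient {n : ℕ} (c w : ℝ) (a z : EuclideanSpace ℝ (Fin n)) :
    HasGradientAt (fun x' => c + (w / 2) * ‖x' - a‖ ^ 2) (w • (z - a)) z := by
  rw [hasGradientAt_iff_hasFDerivAt]
  have h1 : HasFDerivAt (fun x' : EuclideanSpace ℝ (Fin n) => x' - a)
      (ContinuousLinearMap.id ℝ _) z := (hasFDerivAt_id z).sub_const a
  have h2 := h1.norm_sq
  have h3 := (h2.const_mul (w / 2)).const_add c
  refine h3.congr_fderiv ?_
  ext h
  simp [real_inner_smul_left, inner_smul_left]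
  ring

lemma aux_key {n : ℕ}
    (x : EuclideanSpace ℝ (Fin n)) (u₀ : ℝ) (hu₀ : 0 < u₀)
    (p : EuclideanSpace ℝ (Fin n)) (hp : ‖p‖ < 1)
    (v : ℝ) (hv : 0 < v) (y : EuclideanSpace ℝ (Fin n))
    (hstat : v • (x - y) = -p)
    (hcontact : u₀ - 1 / (2 * v) + (v / 2) * ‖x - y‖ ^ 2 = 0) :
    v = (1 - ‖p‖ ^ 2) / (2 * u₀) ∧ y = x + (2 * u₀ / (1 - ‖p‖ ^ 2)) • p := by
  have hnorm : v * ‖x - y‖ = ‖p‖ := by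
    have := congrArg norm hstat
    rwa [norm_smul, norm_neg, Real.norm_eq_abs, abs_of_pos hv] at this
  have hsq : v ^ 2 * ‖x - y‖ ^ 2 = ‖p‖ ^ 2 := by
    rw [← hnorm]; ring
  have hvne : v ≠ 0 := ne_of_gt hv
  have hkey : 2 * v * u₀ = 1 - ‖p‖ ^ 2 := by
    have h := hcontact
    field_simp at h
    nlinarith [hsq]
  have hden : 1 - ‖p‖ ^ 2 ≠ 0 := by nlinarith
  constructor
  · field_simp [← hkey]; linarith [hkey]
  · have h1 : y = x + (1 / v) • p := by
      have : x - y = (1 / v) • (-p) := by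
        rw [← hstat, smul_smul]
        simp [hvne]
      rw [smul_neg] at this
      have := sub_eq_iff_eq_add.mp this
      rw [this]; abel
    rw [h1]
    congr 1
    have : (1 : ℝ) / v = 2 * u₀ / (1 - ‖p‖ ^ 2) := by
      rw [← hkey]; field_simp
    rw [this]

/-- **Proposition 5.1.** For the near field reflector problem with
parallel source and constraint ϕ(x,y,s) = −1/(2s) + (s/2)|x−y|²: if v > 0 and y satisfy
the stationarity condition (x−y)v = −p and the contact condition
u₀ − 1/(2v) + (v/2)|x−y|² = 0 with u₀ > 0, |p| < 1, then v = (1−|p|²)/(2u₀) and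
y = x + (2u₀/(1−|p|²))p. Consequently the optimal mapping determined by
ϕ_x(x,Tx,v(Tx)) + Du(x) = 0 and u(x) + ϕ(x,Tx,v(Tx)) = 0 coincides with the reflection
mapping T(x) = x + 2u(x)Du(x)/(1−|Du(x)|²). -/
theorem reflector_parallel_source_optimal_map
    {n : ℕ}
    (x : EuclideanSpace ℝ (Fin n)) (u₀ : ℝ) (hu₀ : 0 < u₀)
    (p : EuclideanSpace ℝ (Fin n)) (hp : ‖p‖ < 1)
    (v : ℝ) (hv : 0 < v) (y : EuclideanSpace ℝ (Fin n))
    -- stationarity: (x − y)v = −p, i.e. ϕ_x(x,y,v) + p = 0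
    (hstat : v • (x - y) = -p)
    -- contact: u₀ + ϕ(x,y,v) = 0
    (hcontact : u₀ - 1 / (2 * v) + (v / 2) * ‖x - y‖ ^ 2 = 0) :
    v = (1 - ‖p‖ ^ 2) / (2 * u₀) ∧
    y = x + (2 * u₀ / (1 - ‖p‖ ^ 2)) • p ∧
    -- Consequently, the optimal mapping coincides with the reflection mapping:
    (∀ (u w : EuclideanSpace ℝ (Fin n) → ℝ)
        (T : EuclideanSpace ℝ (Fin n) → EuclideanSpace ℝ (Fin n))
        (z : EuclideanSpace ℝ (Fin n)),
      0 < u z → DifferentiableAt ℝ u z → ‖gradient u z‖ < 1 → 0 < w (T z) →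
      -- ϕ_x(z, Tz, w(Tz)) + Du(z) = 0
      gradient (fun x' => -1 / (2 * w (T z)) + (w (T z) / 2) * ‖x' - T z‖ ^ 2) z +
        gradient u z = 0 →
      -- u(z) + ϕ(z, Tz, w(Tz)) = 0
      u z + (-1 / (2 * w (T z)) + (w (T z) / 2) * ‖z - T z‖ ^ 2) = 0 →
      T z = z + (2 * u z / (1 - ‖gradient u z‖ ^ 2)) • gradient u z) := by
  obtain ⟨h1, h2⟩ := aux_key x u₀ hu₀ p hp v hv y hstat hcontact
  refine ⟨h1, h2, ?_⟩
  intro u w T z hu hdiff hgrad hw hstat' hcontact'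
  have hg : gradient (fun x' => -1 / (2 * w (T z)) + (w (T z) / 2) * ‖x' - T z‖ ^ 2) z
      = w (T z) • (z - T z) := by
    have := aux_gradient (-1 / (2 * w (T z))) (w (T z)) (T z) z
    exact this.gradient
  rw [hg] at hstat'
  have hstat2 : w (T z) • (z - T z) = -gradient u z := by
    rw [eq_neg_iff_add_eq_zero]; exact hstat'
  have hcontact2 : u z - 1 / (2 * w (T z)) + (w (T z) / 2) * ‖z - T z‖ ^ 2 = 0 := by
    have hr : (-1:ℝ) / (2 * w (T z)) = -(1 / (2 * w (T z))) := by ring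
    rw [hr] at hcontact'
    linarith [hcontact']
  exact (aux_key z (u z) hu (gradient u z) hgrad (w (T z)) hw (T z) hstat2 hcontact2).2
end
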